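/- arXiv:2011.12478 — 2 statements merged into one kernel-verified Lean document; each statement's English description precedes it below -/
import Mathlib

section
/- Let g : [a,b] → ℝ be continuous and let G := {(t, g(t)) : t ∈ [a,b]} ⊆ ℝ². Then for all a ≤ s ≤ t ≤ b, the intrinsic distance on G between (s, g(s)) and (t, g(t)) equals the length Λ of the curve τ ↦ (τ, g(τ)) restricted to [s,t] (an equality in [0,∞]). -/
/-!
The curve `c τ = (τ, g τ)` is admissible after an affine reparametrisation of `[s, t]` onto
`[0, 1]`, which gives `≤`. Conversely, any admissible curve `γ` in the graph is `c ∘ h`, where the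
first coordinate `h` of `γ` is a continuous function running from `s` to `t`. The first hitting
times of `h` form a monotone right inverse of `h` on `[s, t]`, so `c` on `[s, t]` is a monotone
reparametrisation of a piece of `γ`, and its length is at most that of `γ`.
-/

open Set
open scoped ENNReal

/-- The intrinsic distance on a set `A`: the infimum of the lengths (total variations) of
continuous curves `γ : [0,1] → A` joining the two points, in `[0,∞]`. -/
noncomputable def intrinsicDist {E : Type*} [PseudoEMetricSpace E] (A : Set E) (x x' : E) :
    ℝ≥0∞ :=
  sInf {L | ∃ γ : ℝ → E, ContinuousOn γ (Icc 0 1) ∧ MapsTo γ (Icc 0 1) A ∧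
    γ 0 = x ∧ γ 1 = x' ∧ L = eVariationOn γ (Icc 0 1)}

/-- The point `(x, y) ∈ ℝ²` (as `EuclideanSpace ℝ (Fin 2)`). -/
noncomputable def pt2 (x y : ℝ) : EuclideanSpace ℝ (Fin 2) :=
  (WithLp.equiv 2 (Fin 2 → ℝ)).symm ![x, y]

/-- `φ x` is the first time at which `h` reaches the level `x`; by the intermediate value theorem,
`h` takes the value `x` exactly there. -/
theorem exists_monotoneOn_rightInvOn_of_continuousOn {h : ℝ → ℝ} {p q : ℝ} (hpq : p ≤ q)
    (hh : ContinuousOn h (Icc p q)) :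
    ∃ φ : ℝ → ℝ, MonotoneOn φ (Icc (h p) (h q)) ∧ MapsTo φ (Icc (h p) (h q)) (Icc p q) ∧
      RightInvOn φ h (Icc (h p) (h q)) := by
  set S : ℝ → Set ℝ := fun x => {u ∈ Icc p q | x ≤ h u}
  have hS_bdd : ∀ x, BddBelow (S x) := fun x => ⟨p, fun u hu => hu.1.1⟩
  have hS_nonempty : ∀ x ≤ h q, (S x).Nonempty := fun x hx => ⟨q, ⟨hpq, le_rfl⟩, hx⟩
  have hφS : ∀ x ≤ h q, sInf (S x) ∈ S x := fun x hx =>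
    (hh.preimage_isClosed_of_isClosed isClosed_Icc isClosed_Ici).csInf_mem
      (hS_nonempty x hx) (hS_bdd x)
  refine ⟨fun x => sInf (S x), fun x hx y hy hxy => ?_, fun x hx => (hφS x hx.2).1, fun x hx => ?_⟩
  · exact csInf_le_csInf (hS_bdd x) (hS_nonempty y hy.2) fun u hu => ⟨hu.1, hxy.trans hu.2⟩
  · obtain ⟨⟨hpφ, hφq⟩, hxφ⟩ := hφS x hx.2
    obtain ⟨u, ⟨hpu, huφ⟩, hux⟩ :=
      intermediate_value_Icc hpφ (hh.mono (Icc_subset_Icc le_rfl hφq)) ⟨hx.1, hxφ⟩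
    have hφu : sInf (S x) ≤ u := csInf_le (hS_bdd x) ⟨⟨hpu, huφ.trans hφq⟩, hux.ge⟩
    show h (sInf (S x)) = x
    rwa [← le_antisymm huφ hφu]

variable {E : Type*} [PseudoEMetricSpace E]

theorem eVariationOn_le_comp_of_continuousOn (f : ℝ → E) {h : ℝ → ℝ} {p q : ℝ} (hpq : p ≤ q)
    (hh : ContinuousOn h (Icc p q)) :
    eVariationOn f (Icc (h p) (h q)) ≤ eVariationOn (f ∘ h) (Icc p q) := by
  obtain ⟨φ, hφ, hφmaps, hφinv⟩ :=
    exists_monotoneOn_rightInvOn_of_continuousOn hpq hh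
  calc eVariationOn f (Icc (h p) (h q))
      = eVariationOn ((f ∘ h) ∘ φ) (Icc (h p) (h q)) :=
        eVariationOn.eq_of_eqOn fun x hx => congrArg f (hφinv hx).symm
    _ ≤ eVariationOn (f ∘ h) (Icc p q) := eVariationOn.comp_le_of_monotoneOn _ φ hφ hφmaps

theorem intrinsicDist_le_eVariationOn {A : Set E} {γ : ℝ → E} {s t : ℝ} (hst : s ≤ t)
    (hγ : ContinuousOn γ (Icc s t)) (hγA : MapsTo γ (Icc s t) A) :
    intrinsicDist A (γ s) (γ t) ≤ eVariationOn γ (Icc s t) := by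
  set φ := AffineMap.lineMap (k := ℝ) s t
  have hφ_image : φ '' Icc 0 1 = Icc s t := by
    rw [← segment_eq_image_lineMap, segment_eq_Icc hst]
  have hφ_maps : MapsTo φ (Icc 0 1) (Icc s t) := hφ_image ▸ mapsTo_image φ _
  refine sInf_le ⟨γ ∘ φ, hγ.comp AffineMap.lineMap_continuous.continuousOn hφ_maps,
    hγA.comp hφ_maps, by simp [φ], by simp [φ], ?_⟩
  rw [eVariationOn.comp_eq_of_monotoneOn γ φ ((AffineMap.lineMap_mono hst).monotoneOn _),
    hφ_image]

theorem eVariationOn_le_intrinsicDist_image {c : ℝ → E} {π : E → ℝ} {a b s t : ℝ}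
    (hπ : ContinuousOn π (c '' Icc a b)) (hπc : LeftInvOn π c (Icc a b))
    (hs : s ∈ Icc a b) (ht : t ∈ Icc a b) :
    eVariationOn c (Icc s t) ≤ intrinsicDist (c '' Icc a b) (c s) (c t) := by
  refine le_sInf ?_
  rintro L ⟨γ, hγ, hγA, hγ0, hγ1, rfl⟩
  have hcπγ : EqOn (c ∘ π ∘ γ) γ (Icc 0 1) := fun u hu => by
    obtain ⟨τ, hτ, hγu⟩ := hγA hu
    simp only [Function.comp_apply, ← hγu, hπc hτ]
  calc eVariationOn c (Icc s t)
      = eVariationOn c (Icc ((π ∘ γ) 0) ((π ∘ γ) 1)) := by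
        rw [Function.comp_apply, Function.comp_apply, hγ0, hγ1, hπc hs, hπc ht]
    _ ≤ eVariationOn (c ∘ π ∘ γ) (Icc 0 1) :=
        eVariationOn_le_comp_of_continuousOn c zero_le_one (hπ.comp hγ hγA)
    _ = eVariationOn γ (Icc 0 1) := eVariationOn.eq_of_eqOn hcπγ

theorem intrinsicDist_image_eq_eVariationOn {c : ℝ → E} {π : E → ℝ} {a b s t : ℝ}
    (hc : ContinuousOn c (Icc a b)) (hπ : ContinuousOn π (c '' Icc a b))
    (hπc : LeftInvOn π c (Icc a b)) (has : a ≤ s) (hst : s ≤ t) (htb : t ≤ b) :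
    intrinsicDist (c '' Icc a b) (c s) (c t) = eVariationOn c (Icc s t) := by
  have hsub : Icc s t ⊆ Icc a b := Icc_subset_Icc has htb
  exact le_antisymm
    (intrinsicDist_le_eVariationOn hst (hc.mono hsub) ((mapsTo_image c _).mono_left hsub))
    (eVariationOn_le_intrinsicDist_image hπ hπc (hsub ⟨le_rfl, hst⟩) (hsub ⟨hst, le_rfl⟩))

/-- For `g : [a,b] → ℝ` continuous with graph `G ⊆ ℝ²`, the intrinsic
distance on `G` between `(s, g(s))` and `(t, g(t))` (for `a ≤ s ≤ t ≤ b`) equals the length of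
the curve `τ ↦ (τ, g(τ))` over `[s, t]` (an equality in `[0,∞]`). -/
theorem intrinsicDist_graph (a b : ℝ) (g : ℝ → ℝ) (hg : ContinuousOn g (Icc a b))
    (s t : ℝ) (has : a ≤ s) (hst : s ≤ t) (htb : t ≤ b) :
    intrinsicDist ((fun τ => pt2 τ (g τ)) '' Icc a b) (pt2 s (g s)) (pt2 t (g t)) =
      eVariationOn (fun τ => pt2 τ (g τ)) (Icc s t) := by
  have hc : ContinuousOn (fun τ => pt2 τ (g τ)) (Icc a b) := by
    simp only [pt2, WithLp.equiv_symm_apply]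
    fun_prop
  refine intrinsicDist_image_eq_eVariationOn (π := fun v => v 0) hc ?_ (fun τ _ => ?_) has hst htb
  · fun_prop
  · simp [pt2]
end

section
/- In the two-curve setting below: for all 1 ≤ i < j ≤ n, d_{M₁}(x_i, x_j) = (j−i)ε, d_{M₂}(x_i, x_j) = (j−i)η, and (j−i)(C₁ε³ − C₂ε⁵) ≤ d_{M₂}(x_i, x_j) − d_{M₁}(x_i, x_j) ≤ (j−i)·C₁ε³ = C₁ε²·d_{M₁}(x_i, x_j). In particular, if C₂ε² ≤ C₁/2, then d_{M₂}(x_i, x_j) − d_{M₁}(x_i, x_j) ≥ (C₁/2)·ε²·d_{M₁}(x_i, x_j). -/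
open Set
open scoped ENNReal

/-- The tri-cube function `w(t) = (1 − |t|³)₊³`. -/
noncomputable def triCube (t : ℝ) : ℝ := (max (1 - |t| ^ 3) 0) ^ 3

/-- The bump-train function `g(t) = A(ε/2)²·Σ_{i=1}^{n−1} w((t − (i−1/2)ε)/(ε/2))`. -/
noncomputable def bumpTrain (A ε : ℝ) (n : ℕ) (t : ℝ) : ℝ :=
  A * (ε / 2) ^ 2 * ∑ i ∈ Finset.range (n - 1), triCube ((t - ((i : ℝ) + 1 / 2) * ε) / (ε / 2))

/-! Both curves are graphs `t ↦ (t, g t)` over `[0, 1]`. A path inside a graph projects to a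
continuous path of abscissae, which must sweep the whole interval between the endpoints, so the
intrinsic distance between two points of a graph is the length of the graph arc between them; for
a `C¹` graph that length is `∫ √(1 + g'²)`. The bumps of `g` are translates of one another and
each lives in its own cell `[kε, (k + 1)ε]`, so the arc from `x_i` to `x_j` is made of `j − i`
congruent arcs of length `η`. Finally `η` is estimated by integrating
`1 + u²/2 − u⁴/8 ≤ √(1 + u²) ≤ 1 + u²/2` with `u = g'` over one cell and rescaling the bump to
`[−1, 1]`, which produces the constants `C₁ ε³` and `C₂ ε⁵`. -/

open Filter Topology MeasureTheory

lemma eVariationOn_le_of_edist_le {α E F : Type*} [LinearOrder α] [PseudoEMetricSpace E]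
    [PseudoEMetricSpace F] {f : α → E} {g : α → F} {s : Set α}
    (h : ∀ x ∈ s, ∀ y ∈ s, x ≤ y → edist (f x) (f y) ≤ edist (g x) (g y)) :
    eVariationOn f s ≤ eVariationOn g s :=
  iSup_mono fun p => Finset.sum_le_sum fun i _ => by
    rw [edist_comm, edist_comm (g _)]
    exact h _ (p.2.2.2 i) _ (p.2.2.2 (i + 1)) (p.2.2.1 (Nat.le_succ i))

lemma ContinuousOn.of_dist_le {α β γ : Type*} [PseudoMetricSpace α] [PseudoMetricSpace β]
    [PseudoMetricSpace γ] {f : α → β} {g : α → γ} {s : Set α} (hg : ContinuousOn g s)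
    (h : ∀ x ∈ s, ∀ y ∈ s, dist (f x) (f y) ≤ dist (g x) (g y)) : ContinuousOn f s := by
  intro x hx
  rw [ContinuousWithinAt, tendsto_iff_dist_tendsto_zero]
  refine squeeze_zero' (Filter.Eventually.of_forall fun _ => dist_nonneg) ?_
    (tendsto_iff_dist_tendsto_zero.1 (hg x hx))
  filter_upwards [self_mem_nhdsWithin] with y hy using h y hy x hx

lemma HasDerivAt.tendsto_slope_right {F : Type*} [NormedAddCommGroup F] [NormedSpace ℝ F]
    {f : ℝ → F} {f' : F} {x : ℝ} (h : HasDerivAt f f' x) :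
    Tendsto (slope f x) (𝓝[>] x) (𝓝 f') :=
  (hasDerivAt_iff_tendsto_slope.1 h).mono_left (nhdsWithin_mono _ fun _ hz => ne_of_gt hz)

section CurveLength

variable {E : Type*} [NormedAddCommGroup E] [NormedSpace ℝ E] [CompleteSpace E] {Φ Φ' : ℝ → E}

lemma norm_sub_le_integral_norm_deriv (hΦ : ∀ t, HasDerivAt Φ (Φ' t) t) (hΦ' : Continuous Φ')
    {a b : ℝ} (hab : a ≤ b) : ‖Φ b - Φ a‖ ≤ ∫ t in a..b, ‖Φ' t‖ := by
  rw [← intervalIntegral.integral_eq_sub_of_hasDerivAt (fun t _ => hΦ t)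
    (hΦ'.intervalIntegrable _ _)]
  exact intervalIntegral.norm_integral_le_integral_norm hab

lemma eVariationOn_Icc_le_integral_norm_deriv (hΦ : ∀ t, HasDerivAt Φ (Φ' t) t)
    (hΦ' : Continuous Φ') {a b : ℝ} (hab : a ≤ b) :
    eVariationOn Φ (Icc a b) ≤ ENNReal.ofReal (∫ t in a..b, ‖Φ' t‖) := by
  set G : ℝ → ℝ := fun t => ∫ s in a..t, ‖Φ' s‖
  have hG : ∀ x y, G y - G x = ∫ t in x..y, ‖Φ' t‖ := fun x y =>
    intervalIntegral.integral_interval_sub_left (hΦ'.norm.intervalIntegrable _ _)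
      (hΦ'.norm.intervalIntegrable _ _)
  have hGmono : Monotone G := fun x y hxy => sub_nonneg.1 <| (hG x y).symm ▸
    intervalIntegral.integral_nonneg hxy fun _ _ => norm_nonneg _
  calc eVariationOn Φ (Icc a b) ≤ eVariationOn G (Icc a b) :=
        eVariationOn_le_of_edist_le fun x _ y _ hxy => by
          rw [edist_comm, edist_dist, edist_dist, dist_eq_norm, dist_comm, Real.dist_eq,
            abs_of_nonneg (sub_nonneg.2 (hGmono hxy)), hG]
          exact ENNReal.ofReal_le_ofReal (norm_sub_le_integral_norm_deriv hΦ hΦ' hxy)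
    _ = ENNReal.ofReal (∫ t in a..b, ‖Φ' t‖) := by
        rw [← hG, ← (hGmono.monotoneOn (Icc a b)).eVariationOn_eq ⟨le_rfl, hab⟩ ⟨hab, le_rfl⟩,
          inter_self]

lemma locallyBoundedVariationOn_of_hasDerivAt (hΦ : ∀ t, HasDerivAt Φ (Φ' t) t)
    (hΦ' : Continuous Φ') : LocallyBoundedVariationOn Φ univ := fun x y _ _ =>
  ne_top_of_le_ne_top ENNReal.ofReal_ne_top <|
    (eVariationOn.mono Φ (inter_subset_right.trans
      (Icc_subset_Icc (min_le_left x y) (le_max_right x y)))).trans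
      (eVariationOn_Icc_le_integral_norm_deriv hΦ hΦ' min_le_max)

lemma variationOnFromTo_le_integral_norm_deriv (hΦ : ∀ t, HasDerivAt Φ (Φ' t) t)
    (hΦ' : Continuous Φ') {a b : ℝ} (hab : a ≤ b) :
    variationOnFromTo Φ univ a b ≤ ∫ t in a..b, ‖Φ' t‖ := by
  rw [variationOnFromTo.eq_of_le Φ univ hab, univ_inter]
  exact ENNReal.toReal_le_of_le_ofReal
    (intervalIntegral.integral_nonneg hab fun _ _ => norm_nonneg _)
    (eVariationOn_Icc_le_integral_norm_deriv hΦ hΦ' hab)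

lemma sub_le_sub_of_norm_sub_le_sub {F : Type*} [NormedAddCommGroup F] [NormedSpace ℝ F]
    {Ψ Ψ' : ℝ → F} {G V : ℝ → ℝ} {a b : ℝ} (hab : a ≤ b) (hΨ : ∀ t, HasDerivAt Ψ (Ψ' t) t)
    (hG : ∀ t, HasDerivAt G ‖Ψ' t‖ t) (hV : ContinuousOn V (Icc a b))
    (hΨV : ∀ x y, x ≤ y → ‖Ψ y - Ψ x‖ ≤ V y - V x) : G b - G a ≤ V b - V a := by
  -- the right Dini derivative of `G - V` is nonpositive
  have hslope : ∀ x ∈ Ico a b, ∀ r, (0 : ℝ) < r → ∃ᶠ z in 𝓝[>] x, slope (G - V) x z < r := by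
    intro x _ r hr
    have hlim : Tendsto (fun z => slope G x z - ‖slope Ψ x z‖) (𝓝[>] x) (𝓝 0) := by
      simpa using (hG x).tendsto_slope_right.sub (hΨ x).tendsto_slope_right.norm
    have hle : ∀ᶠ z in 𝓝[>] x, slope (G - V) x z ≤ slope G x z - ‖slope Ψ x z‖ := by
      filter_upwards [self_mem_nhdsWithin] with z hz
      have hz' : 0 < z - x := sub_pos.2 hz
      rw [slope_def_field, slope_def_field, slope_def_module, norm_smul, norm_inv,
        Real.norm_of_nonneg hz'.le, ← div_eq_inv_mul, div_sub_div_same,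
        div_le_div_iff_of_pos_right hz', Pi.sub_apply, Pi.sub_apply]
      linarith [hΨV x z hz.le]
    exact ((hlim.eventually (gt_mem_nhds hr)).and hle).mono
      (fun z hz => hz.2.trans_lt hz.1) |>.frequently
  have h := image_le_of_liminf_slope_right_le_deriv_boundary
    ((continuousOn_of_forall_continuousAt fun x _ => (hG x).continuousAt).sub hV)
    (B := fun _ => G a - V a) (B' := 0) le_rfl continuousOn_const
    (fun x _ => hasDerivWithinAt_const x _ _) (by simpa using hslope) ⟨hab, le_rfl⟩
  simp only [Pi.sub_apply] at h
  linarith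

lemma integral_norm_deriv_le_eVariationOn_Icc (hΦ : ∀ t, HasDerivAt Φ (Φ' t) t)
    (hΦ' : Continuous Φ') {a b : ℝ} (hab : a ≤ b) :
    ENNReal.ofReal (∫ t in a..b, ‖Φ' t‖) ≤ eVariationOn Φ (Icc a b) := by
  set G : ℝ → ℝ := fun t => ∫ s in a..t, ‖Φ' s‖
  set V : ℝ → ℝ := variationOnFromTo Φ univ a
  have hbv := locallyBoundedVariationOn_of_hasDerivAt hΦ hΦ'
  have hGd : ∀ x, HasDerivAt G ‖Φ' x‖ x := fun x =>
    (hΦ'.norm.integral_hasStrictDerivAt a x).hasDerivAt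
  have hV : ∀ x y, V y - V x = variationOnFromTo Φ univ x y := fun x y =>
    variationOnFromTo.sub_right hbv (mem_univ a) (mem_univ y) (mem_univ x)
  have hΦV : ∀ x y, x ≤ y → ‖Φ y - Φ x‖ ≤ V y - V x := fun x y hxy => by
    rw [hV, ← dist_eq_norm, dist_comm, variationOnFromTo.eq_of_le Φ univ hxy]
    exact (hbv x y trivial trivial).dist_le ⟨trivial, le_rfl, hxy⟩ ⟨trivial, hxy, le_rfl⟩
  have hVG : ∀ x y, x ≤ y → dist (V x) (V y) ≤ dist (G x) (G y) := fun x y hxy => by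
    have h₁ := hΦV x y hxy
    have h₂ : V y - V x ≤ G y - G x := by
      rw [hV, intervalIntegral.integral_interval_sub_left (hΦ'.norm.intervalIntegrable _ _)
        (hΦ'.norm.intervalIntegrable _ _)]
      exact variationOnFromTo_le_integral_norm_deriv hΦ hΦ' hxy
    rw [dist_comm, dist_comm (G x), Real.dist_eq, Real.dist_eq]
    exact abs_le_abs (by linarith) (by linarith [norm_nonneg (Φ y - Φ x)])
  have hVcont : ContinuousOn V (Icc a b) :=
    ContinuousOn.of_dist_le (fun x _ => (hGd x).continuousAt.continuousWithinAt)
      fun x _ y _ => (le_total x y).elim (hVG x y) fun hyx => by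
        rw [dist_comm, dist_comm (G x)]; exact hVG y x hyx
  have h := sub_le_sub_of_norm_sub_le_sub hab hΦ hGd hVcont hΦV
  simp only [G, V, intervalIntegral.integral_same, variationOnFromTo.self, sub_zero,
    variationOnFromTo.eq_of_le Φ univ hab, univ_inter] at h
  exact ENNReal.ofReal_le_of_le_toReal h

lemma eVariationOn_Icc_eq_integral_norm_deriv (hΦ : ∀ t, HasDerivAt Φ (Φ' t) t)
    (hΦ' : Continuous Φ') {a b : ℝ} (hab : a ≤ b) :
    eVariationOn Φ (Icc a b) = ENNReal.ofReal (∫ t in a..b, ‖Φ' t‖) :=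
  le_antisymm (eVariationOn_Icc_le_integral_norm_deriv hΦ hΦ' hab)
    (integral_norm_deriv_le_eVariationOn_Icc hΦ hΦ' hab)

end CurveLength

lemma eVariationOn_Icc_le_comp {E : Type*} [PseudoEMetricSpace E] (f : ℝ → E) {u : ℝ → ℝ}
    {c d : ℝ} (hcd : c ≤ d) (hu : ContinuousOn u (Icc c d)) :
    eVariationOn f (Icc (u c) (u d)) ≤ eVariationOn (f ∘ u) (Icc c d) := by
  refine iSup_le fun ⟨m, v, hv, hvs⟩ => ?_
  -- `σ k` is the first time at which `u` reaches `v k`; it is monotone in `k`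
  set S : ℕ → Set ℝ := fun k => Icc c d ∩ u ⁻¹' Ici (v k)
  have hS : ∀ k, IsClosed (S k) := fun k =>
    hu.preimage_isClosed_of_isClosed isClosed_Icc isClosed_Ici
  have hSne : ∀ k, (S k).Nonempty := fun k => ⟨d, right_mem_Icc.2 hcd, (hvs k).2⟩
  have hSbdd : ∀ k, BddBelow (S k) := fun k => ⟨c, fun s hs => hs.1.1⟩
  set σ : ℕ → ℝ := fun k => sInf (S k)
  have hσS : ∀ k, σ k ∈ S k := fun k => (hS k).csInf_mem (hSne k) (hSbdd k)
  have hσ : Monotone σ := fun k l hkl =>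
    csInf_le_csInf (hSbdd k) (hSne l) fun s hs => ⟨hs.1, (hv hkl).trans hs.2⟩
  have huσ : ∀ k, u (σ k) = v k := by
    intro k
    obtain ⟨s, hs, hsv⟩ := intermediate_value_Icc (hσS k).1.1
      (hu.mono (Icc_subset_Icc le_rfl (hσS k).1.2)) ⟨(hvs k).1, (hσS k).2⟩
    have hsS : s ∈ S k := ⟨⟨hs.1, hs.2.trans (hσS k).1.2⟩, hsv.ge⟩
    rw [← le_antisymm hs.2 (csInf_le (hSbdd k) hsS), hsv]
  calc ∑ i ∈ Finset.range m, edist (f (v (i + 1))) (f (v i))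
      = ∑ i ∈ Finset.range m, edist ((f ∘ u) (σ (i + 1))) ((f ∘ u) (σ i)) := by
        simp only [Function.comp_apply, huσ]
    _ ≤ eVariationOn (f ∘ u) (Icc c d) := eVariationOn.sum_le hσ fun k => (hσS k).1

lemma intrinsicDist_image_eq_eVariationOn_s15 {E : Type*} [PseudoEMetricSpace E] {Φ : ℝ → E}
    {π : E → ℝ} (hπ : Continuous π) {c d a b : ℝ} (hπΦ : ∀ t ∈ Icc c d, π (Φ t) = t)
    (hΦ : ContinuousOn Φ (Icc a b)) (hca : c ≤ a) (hab : a ≤ b) (hbd : b ≤ d) :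
    intrinsicDist (Φ '' Icc c d) (Φ a) (Φ b) = eVariationOn Φ (Icc a b) := by
  refine le_antisymm (sInf_le ?_) (le_sInf ?_)
  · set φ : ℝ → ℝ := fun s => a + s * (b - a)
    have hφmono : Monotone φ := fun s s' hss' => by
      simp only [φ]; nlinarith
    have hφ : φ '' Icc 0 1 = Icc a b := by
      rw [(Continuous.continuousOn (by fun_prop)).image_Icc_of_monotoneOn zero_le_one
        (hφmono.monotoneOn _)]
      simp [φ]
    refine ⟨Φ ∘ φ, hΦ.comp (by fun_prop) (hφ ▸ mapsTo_image φ _), fun s hs => ?_,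
      by simp [φ], by simp [φ], ?_⟩
    · obtain ⟨hs₁, hs₂⟩ : φ s ∈ Icc a b := hφ ▸ mem_image_of_mem φ hs
      exact mem_image_of_mem Φ ⟨hca.trans hs₁, hs₂.trans hbd⟩
    · rw [eVariationOn.comp_eq_of_monotoneOn Φ φ (hφmono.monotoneOn _), hφ]
  · rintro _ ⟨γ, hγc, hγM, hγ0, hγ1, rfl⟩
    have hγ : EqOn γ (Φ ∘ π ∘ γ) (Icc 0 1) := fun s hs => by
      obtain ⟨t, ht, hts⟩ := hγM hs
      simp [← hts, hπΦ t ht]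
    have h := eVariationOn_Icc_le_comp Φ zero_le_one (hπ.comp_continuousOn hγc)
    rwa [Function.comp_apply, Function.comp_apply, hγ0, hγ1, hπΦ a ⟨hca, hab.trans hbd⟩,
      hπΦ b ⟨hca.trans hab, hbd⟩, ← eVariationOn.eq_of_eqOn hγ] at h

lemma pt2_eq_smul_add (x y : ℝ) : pt2 x y = x • pt2 1 0 + y • pt2 0 1 := by
  ext i; fin_cases i <;> simp [pt2]

lemma norm_pt2 (x y : ℝ) : ‖pt2 x y‖ = √(x ^ 2 + y ^ 2) := by
  simp [pt2, EuclideanSpace.norm_eq, Fin.sum_univ_two]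

lemma Continuous.pt2 {f g : ℝ → ℝ} (hf : Continuous f) (hg : Continuous g) :
    Continuous fun t => pt2 (f t) (g t) := by
  simp_rw +singlePass [pt2_eq_smul_add (f _)]
  fun_prop

lemma HasDerivAt.pt2 {f g : ℝ → ℝ} {f' g' t : ℝ} (hf : HasDerivAt f f' t)
    (hg : HasDerivAt g g' t) : HasDerivAt (fun s => pt2 (f s) (g s)) (pt2 f' g') t := by
  simp_rw +singlePass [pt2_eq_smul_add (f _), pt2_eq_smul_add f']
  exact (hf.smul_const _).add (hg.smul_const _)

section Graph

variable {g g' : ℝ → ℝ}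

lemma eVariationOn_graph (hg : ∀ t, HasDerivAt g (g' t) t) (hg' : Continuous g') {a b : ℝ}
    (hab : a ≤ b) :
    eVariationOn (fun t => pt2 t (g t)) (Icc a b) =
      ENNReal.ofReal (∫ t in a..b, √(1 + g' t ^ 2)) := by
  rw [eVariationOn_Icc_eq_integral_norm_deriv (fun t => (hasDerivAt_id' t).pt2 (hg t))
    (continuous_const.pt2 hg') hab]
  simp [norm_pt2]

lemma intrinsicDist_graph_s15 (hg : ∀ t, HasDerivAt g (g' t) t) (hg' : Continuous g')
    {c a b d : ℝ} (hca : c ≤ a) (hab : a ≤ b) (hbd : b ≤ d) :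
    intrinsicDist {p | ∃ t ∈ Icc c d, p = pt2 t (g t)} (pt2 a (g a)) (pt2 b (g b)) =
      ENNReal.ofReal (∫ t in a..b, √(1 + g' t ^ 2)) := by
  have hM : {p | ∃ t ∈ Icc c d, p = pt2 t (g t)} = (fun t => pt2 t (g t)) '' Icc c d := by
    ext; simp [eq_comm]
  have hcont : Continuous fun t => pt2 t (g t) :=
    continuous_id'.pt2 (continuous_iff_continuousAt.2 fun t => (hg t).continuousAt)
  rw [hM, intrinsicDist_image_eq_eVariationOn_s15 (π := fun p => p 0) (by fun_prop) (fun _ _ => rfl)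
    hcont.continuousOn hca hab hbd, eVariationOn_graph hg hg' hab]

end Graph

lemma intrinsicDist_segment {c a b d : ℝ} (hca : c ≤ a) (hab : a ≤ b) (hbd : b ≤ d) :
    intrinsicDist {p | ∃ t ∈ Icc c d, p = pt2 t 0} (pt2 a 0) (pt2 b 0) =
      ENNReal.ofReal (b - a) := by
  rw [intrinsicDist_graph_s15 (g := fun _ => 0) (g' := fun _ => 0) (fun t => hasDerivAt_const t 0)
    continuous_const hca hab hbd]
  simp

lemma sqrt_one_add_sq_le (u : ℝ) : √(1 + u ^ 2) ≤ 1 + u ^ 2 / 2 :=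
  Real.sqrt_le_iff.2 ⟨by positivity, by nlinarith [sq_nonneg (u ^ 2)]⟩

lemma le_sqrt_one_add_sq (u : ℝ) : 1 + u ^ 2 / 2 - u ^ 4 / 8 ≤ √(1 + u ^ 2) := by
  rcases le_or_gt (1 + u ^ 2 / 2 - u ^ 4 / 8) 0 with h | h
  · exact h.trans (Real.sqrt_nonneg _)
  · have h8 : u ^ 2 ≤ 8 := by nlinarith [sq_nonneg (u ^ 2)]
    refine (Real.le_sqrt' h).2 ?_
    nlinarith [mul_nonneg (pow_nonneg (sq_nonneg u) 3) (sub_nonneg.2 h8)]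

section SpeedBounds

variable {h : ℝ → ℝ} {a b : ℝ}

lemma integral_sqrt_one_add_sq_le (hh : Continuous h) (hab : a ≤ b) :
    ∫ t in a..b, √(1 + h t ^ 2) ≤ b - a + (∫ t in a..b, h t ^ 2) / 2 := by
  have hi := fun (f : ℝ → ℝ) (hf : Continuous f) => hf.intervalIntegrable (μ := volume) a b
  calc ∫ t in a..b, √(1 + h t ^ 2) ≤ ∫ t in a..b, (1 + h t ^ 2 / 2) :=
        intervalIntegral.integral_mono_on hab (hi _ (by fun_prop)) (hi _ (by fun_prop))
          fun t _ => sqrt_one_add_sq_le _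
    _ = b - a + (∫ t in a..b, h t ^ 2) / 2 := by
        rw [intervalIntegral.integral_add (hi _ (by fun_prop)) (hi _ (by fun_prop)),
          intervalIntegral.integral_div]
        simp

lemma le_integral_sqrt_one_add_sq (hh : Continuous h) (hab : a ≤ b) :
    b - a + (∫ t in a..b, h t ^ 2) / 2 - (∫ t in a..b, h t ^ 4) / 8 ≤
      ∫ t in a..b, √(1 + h t ^ 2) := by
  have hi := fun (f : ℝ → ℝ) (hf : Continuous f) => hf.intervalIntegrable (μ := volume) a b
  calc b - a + (∫ t in a..b, h t ^ 2) / 2 - (∫ t in a..b, h t ^ 4) / 8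
      = ∫ t in a..b, (1 + h t ^ 2 / 2 - h t ^ 4 / 8) := by
        rw [intervalIntegral.integral_sub (hi _ (by fun_prop)) (hi _ (by fun_prop)),
          intervalIntegral.integral_add (hi _ (by fun_prop)) (hi _ (by fun_prop)),
          intervalIntegral.integral_div, intervalIntegral.integral_div]
        simp
    _ ≤ ∫ t in a..b, √(1 + h t ^ 2) :=
        intervalIntegral.integral_mono_on hab (hi _ (by fun_prop)) (hi _ (by fun_prop))
          fun t _ => le_sqrt_one_add_sq _

end SpeedBounds

lemma hasDerivAt_abs_pow_three (x : ℝ) : HasDerivAt (fun x : ℝ => |x| ^ 3) (3 * |x| * x) x := by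
  have h := hasDerivAt_abs_rpow x (p := 3) (by norm_num)
  norm_num at h
  exact_mod_cast h

lemma hasDerivAt_max_zero_pow_three (x : ℝ) :
    HasDerivAt (fun x : ℝ => max x 0 ^ 3) (3 * max x 0 ^ 2) x := by
  have hx : ∀ y : ℝ, max y 0 ^ 3 = (y ^ 3 + |y| ^ 3) / 2 := fun y => by
    rcases le_total y 0 with hy | hy
    · rw [max_eq_right hy, abs_of_nonpos hy]; ring
    · rw [max_eq_left hy, abs_of_nonneg hy]; ring
  simp_rw [hx]
  refine (((hasDerivAt_pow 3 x).add (hasDerivAt_abs_pow_three x)).div_const 2).congr_deriv ?_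
  rcases le_total x 0 with h | h
  · rw [max_eq_right h, abs_of_nonpos h]; norm_num; ring
  · rw [max_eq_left h, abs_of_nonneg h]; norm_num; ring

noncomputable def triCube' (t : ℝ) : ℝ := -9 * t * |t| * max (1 - |t| ^ 3) 0 ^ 2

lemma hasDerivAt_triCube (t : ℝ) : HasDerivAt triCube (triCube' t) t := by
  refine ((hasDerivAt_max_zero_pow_three _).comp t
    ((hasDerivAt_abs_pow_three t).const_sub 1)).congr_deriv ?_
  rw [triCube']; ring

lemma deriv_triCube : deriv triCube = triCube' :=
  funext fun t => (hasDerivAt_triCube t).deriv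

@[fun_prop]
lemma continuous_triCube' : Continuous triCube' := by
  unfold triCube'; fun_prop

lemma max_one_sub_abs_pow_three_eq_zero {s : ℝ} (hs : 1 ≤ |s|) : max (1 - |s| ^ 3) 0 = 0 :=
  max_eq_right (sub_nonpos.2 (one_le_pow₀ hs))

lemma triCube_eq_zero {s : ℝ} (hs : 1 ≤ |s|) : triCube s = 0 := by
  simp [triCube, max_one_sub_abs_pow_three_eq_zero hs]

lemma triCube'_eq_zero {s : ℝ} (hs : 1 ≤ |s|) : triCube' s = 0 := by
  simp [triCube', max_one_sub_abs_pow_three_eq_zero hs]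

noncomputable def bumpTrain' (A ε : ℝ) (n : ℕ) (t : ℝ) : ℝ :=
  A * (ε / 2) * ∑ i ∈ Finset.range (n - 1), triCube' ((t - ((i : ℝ) + 1 / 2) * ε) / (ε / 2))

@[fun_prop]
lemma continuous_bumpTrain' (A ε : ℝ) (n : ℕ) : Continuous (bumpTrain' A ε n) := by
  unfold bumpTrain'
  fun_prop

section BumpTrain

variable (A : ℝ) {ε : ℝ} (n : ℕ)

lemma hasDerivAt_bumpTrain (hε : ε ≠ 0) (t : ℝ) :
    HasDerivAt (bumpTrain A ε n) (bumpTrain' A ε n t) t := by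
  have hbump : ∀ i ∈ Finset.range (n - 1), HasDerivAt
      (fun t => triCube ((t - ((i : ℝ) + 1 / 2) * ε) / (ε / 2)))
      (triCube' ((t - ((i : ℝ) + 1 / 2) * ε) / (ε / 2)) * (1 / (ε / 2))) t := fun i _ =>
    (hasDerivAt_triCube _).comp t (((hasDerivAt_id' t).sub_const _).div_const _)
  refine ((HasDerivAt.fun_sum hbump).const_mul (A * (ε / 2) ^ 2)).congr_deriv ?_
  rw [bumpTrain', Finset.mul_sum, Finset.mul_sum]
  refine Finset.sum_congr rfl fun i _ => ?_
  field_simp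

lemma one_le_abs_bump_arg (hε : 0 < ε) {i : ℕ} {t : ℝ} (h : t ≤ i * ε ∨ (i + 1) * ε ≤ t) :
    1 ≤ |(t - ((i : ℝ) + 1 / 2) * ε) / (ε / 2)| := by
  rw [abs_div, abs_of_pos (half_pos hε), one_le_div (half_pos hε)]
  rcases h with h | h
  · exact le_abs.2 (Or.inr (by linarith))
  · exact le_abs.2 (Or.inl (by linarith))

variable {A n}

lemma bumpTrain_natCast_mul (hε : 0 < ε) (k : ℕ) : bumpTrain A ε n (k * ε) = 0 := by
  refine mul_eq_zero_of_right _ (Finset.sum_eq_zero fun i _ => triCube_eq_zero ?_)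
  refine one_le_abs_bump_arg hε ?_
  rcases lt_or_ge i k with hik | hik
  · exact Or.inr (by gcongr; exact_mod_cast hik)
  · exact Or.inl (by gcongr)

lemma bumpTrain'_eq_of_mem_Icc (hε : 0 < ε) {k : ℕ} (hk : k < n - 1) {t : ℝ}
    (ht : t ∈ Icc (k * ε) ((k + 1) * ε)) :
    bumpTrain' A ε n t = A * (ε / 2) * triCube' ((t - ((k : ℝ) + 1 / 2) * ε) / (ε / 2)) := by
  rw [bumpTrain', Finset.sum_eq_single_of_mem k (Finset.mem_range.2 hk)]
  refine fun i _ hik => triCube'_eq_zero (one_le_abs_bump_arg hε ?_)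
  rcases lt_or_gt_of_ne hik with hik | hik
  · refine Or.inr (le_trans ?_ ht.1)
    gcongr; exact_mod_cast hik
  · refine Or.inl (ht.2.trans ?_)
    gcongr; exact_mod_cast hik

lemma integral_comp_bumpTrain'_period (q : ℝ → ℝ) (hε : 0 < ε) {k : ℕ} (hk : k < n - 1) :
    ∫ t in (k * ε)..((k + 1) * ε), q (bumpTrain' A ε n t) =
      ε / 2 * ∫ s in (-1)..1, q (A * (ε / 2) * triCube' s) := by
  have hle : (k : ℝ) * ε ≤ (k + 1) * ε := by gcongr; linarith
  rw [intervalIntegral.integral_congr (g := fun t =>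
      q (A * (ε / 2) * triCube' ((t - ((k : ℝ) + 1 / 2) * ε) / (ε / 2))))
    (fun t ht => by rw [uIcc_of_le hle] at ht; simp only [bumpTrain'_eq_of_mem_Icc hε hk ht]),
    intervalIntegral.integral_comp_sub_right (fun x => q (A * (ε / 2) * triCube' (x / (ε / 2)))),
    intervalIntegral.integral_comp_div (fun s => q (A * (ε / 2) * triCube' s)) (half_pos hε).ne']
  have e₁ : ((k : ℝ) * ε - (k + 1 / 2) * ε) / (ε / 2) = -1 := by field_simp; ring
  have e₂ : (((k : ℝ) + 1) * ε - (k + 1 / 2) * ε) / (ε / 2) = 1 := by field_simp; ring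
  rw [e₁, e₂, smul_eq_mul]

lemma integral_comp_bumpTrain' {q : ℝ → ℝ} (hq : Continuous q) (hε : 0 < ε) {p m : ℕ}
    (hpm : p + m ≤ n - 1) :
    ∫ t in (p * ε)..((p + m) * ε), q (bumpTrain' A ε n t) =
      m * ∫ t in 0..ε, q (bumpTrain' A ε n t) := by
  have h := intervalIntegral.sum_integral_adjacent_intervals (a := fun k : ℕ => (p + k) * ε)
    (n := m) (μ := volume) fun k _ =>
      (hq.comp (continuous_bumpTrain' A ε n)).intervalIntegrable _ _
  simp only [Function.comp_apply, Nat.cast_add, Nat.cast_zero, Nat.cast_one, add_zero] at h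
  have hperiod : ∀ k < n - 1, ∫ t in (k * ε)..((k + 1) * ε), q (bumpTrain' A ε n t) =
      ∫ t in 0..ε, q (bumpTrain' A ε n t) := fun k hk => by
    rw [integral_comp_bumpTrain'_period q hε hk,
      ← integral_comp_bumpTrain'_period (A := A) (n := n) q hε (k := 0) (by omega)]
    simp
  rw [← h, Finset.sum_congr rfl fun k hk => by
    simpa [add_assoc] using hperiod (p + k) (by have := Finset.mem_range.1 hk; omega)]
  simp

lemma integral_bumpTrain'_pow (hε : 0 < ε) (hn : 2 ≤ n) (k : ℕ) :
    ∫ t in 0..ε, bumpTrain' A ε n t ^ k =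
      ε / 2 * (A * (ε / 2)) ^ k * ∫ s in (-1)..1, triCube' s ^ k := by
  have h := integral_comp_bumpTrain'_period (A := A) (n := n) (· ^ k) hε (k := 0) (by omega)
  simp only [CharP.cast_eq_zero, zero_mul, zero_add, one_mul, mul_pow] at h
  rw [h, intervalIntegral.integral_const_mul]
  ring

lemma eVariationOn_bumpTrain_graph (hε : 0 < ε) :
    eVariationOn (fun t => pt2 t (bumpTrain A ε n t)) (Icc 0 ε) =
      ENNReal.ofReal (∫ t in 0..ε, √(1 + bumpTrain' A ε n t ^ 2)) :=
  eVariationOn_graph (hasDerivAt_bumpTrain A n hε.ne') (continuous_bumpTrain' A ε n) hε.le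

lemma intrinsicDist_bumpTrain_graph (hε : 0 < ε) {p m : ℕ} (hpm : p + m ≤ n - 1)
    (hpm₁ : ((p : ℝ) + m) * ε ≤ 1) :
    intrinsicDist {q | ∃ t ∈ Icc (0 : ℝ) 1, q = pt2 t (bumpTrain A ε n t)}
      (pt2 (p * ε) 0) (pt2 ((p + m) * ε) 0) =
      ENNReal.ofReal (m * ∫ t in 0..ε, √(1 + bumpTrain' A ε n t ^ 2)) := by
  have hx₁ : pt2 (p * ε) 0 = pt2 (p * ε) (bumpTrain A ε n (p * ε)) := by
    rw [bumpTrain_natCast_mul hε]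
  have hx₂ : pt2 ((p + m) * ε) 0 = pt2 ((p + m) * ε) (bumpTrain A ε n ((p + m) * ε)) := by
    rw [← Nat.cast_add, bumpTrain_natCast_mul hε]
  rw [hx₁, hx₂, intrinsicDist_graph_s15 (hasDerivAt_bumpTrain A n hε.ne')
    (continuous_bumpTrain' A ε n) (by positivity) (by gcongr; simp) hpm₁,
    integral_comp_bumpTrain' (q := fun y => √(1 + y ^ 2)) (by fun_prop) hε hpm]

end BumpTrain

section BumpTrainLength

variable {A ε : ℝ} {n : ℕ}

lemma integral_sqrt_one_add_bumpTrain'_sq_le (hε : 0 < ε) (hn : 2 ≤ n) :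
    ∫ t in 0..ε, √(1 + bumpTrain' A ε n t ^ 2) ≤
      ε + A ^ 2 / 16 * (∫ t in (-1 : ℝ)..1, deriv triCube t ^ 2) * ε ^ 3 := by
  have h := integral_sqrt_one_add_sq_le (continuous_bumpTrain' A ε n) hε.le
  rw [integral_bumpTrain'_pow hε hn] at h
  rw [deriv_triCube]
  linarith

lemma le_integral_sqrt_one_add_bumpTrain'_sq (hε : 0 < ε) (hn : 2 ≤ n) :
    ε + A ^ 2 / 16 * (∫ t in (-1 : ℝ)..1, deriv triCube t ^ 2) * ε ^ 3 -
        A ^ 4 / 256 * (∫ t in (-1 : ℝ)..1, deriv triCube t ^ 4) * ε ^ 5 ≤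
      ∫ t in 0..ε, √(1 + bumpTrain' A ε n t ^ 2) := by
  have h := le_integral_sqrt_one_add_sq (continuous_bumpTrain' A ε n) hε.le
  rw [integral_bumpTrain'_pow hε hn, integral_bumpTrain'_pow hε hn] at h
  rw [deriv_triCube]
  linarith

end BumpTrainLength

theorem two_curve_distances_general (A : ℝ) (n : ℕ) (hn : 2 ≤ n)
    (ε : ℝ) (hε : ε = 1 / ((n : ℝ) - 1))
    (M₁ M₂ : Set (EuclideanSpace ℝ (Fin 2)))
    (hM₁ : M₁ = {p | ∃ t ∈ Icc (0 : ℝ) 1, p = pt2 t 0})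
    (hM₂ : M₂ = {p | ∃ t ∈ Icc (0 : ℝ) 1, p = pt2 t (bumpTrain A ε n t)})
    (x : ℕ → EuclideanSpace ℝ (Fin 2)) (hx : ∀ i, x i = pt2 (((i : ℝ) - 1) * ε) 0)
    (η : ℝ) (hη : η = (eVariationOn (fun t => pt2 t (bumpTrain A ε n t)) (Icc 0 ε)).toReal)
    (C₁ : ℝ) (hC₁ : C₁ = A ^ 2 / 16 * ∫ t in (-1 : ℝ)..1, (deriv triCube t) ^ 2)
    (C₂ : ℝ) (hC₂ : C₂ = A ^ 4 / 256 * ∫ t in (-1 : ℝ)..1, (deriv triCube t) ^ 4)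
    (i j : ℕ) (hi : 1 ≤ i) (hij : i < j) (hj : j ≤ n) :
    (intrinsicDist M₁ (x i) (x j)).toReal = ((j : ℝ) - i) * ε ∧
    (intrinsicDist M₂ (x i) (x j)).toReal = ((j : ℝ) - i) * η ∧
    ((j : ℝ) - i) * (C₁ * ε ^ 3 - C₂ * ε ^ 5) ≤
      (intrinsicDist M₂ (x i) (x j)).toReal - (intrinsicDist M₁ (x i) (x j)).toReal ∧
    (intrinsicDist M₂ (x i) (x j)).toReal - (intrinsicDist M₁ (x i) (x j)).toReal ≤
      ((j : ℝ) - i) * (C₁ * ε ^ 3) ∧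
    ((j : ℝ) - i) * (C₁ * ε ^ 3) = C₁ * ε ^ 2 * (intrinsicDist M₁ (x i) (x j)).toReal ∧
    (C₂ * ε ^ 2 ≤ C₁ / 2 →
      C₁ / 2 * ε ^ 2 * (intrinsicDist M₁ (x i) (x j)).toReal ≤
        (intrinsicDist M₂ (x i) (x j)).toReal - (intrinsicDist M₁ (x i) (x j)).toReal) := by
  have hn₁ : (1 : ℝ) ≤ n - 1 := by
    have : (2 : ℝ) ≤ n := by exact_mod_cast hn
    linarith
  have hε₀ : 0 < ε := hε ▸ one_div_pos.2 (by linarith)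
  obtain ⟨p, rfl⟩ : ∃ p, i = p + 1 := ⟨i - 1, by omega⟩
  obtain ⟨m, rfl⟩ : ∃ m, j = p + m + 1 := ⟨j - (p + 1), by omega⟩
  have hpm₁ : ((p : ℝ) + m) * ε ≤ 1 := by
    have : ((p + m + 1 : ℕ) : ℝ) ≤ n := by exact_mod_cast hj
    rw [hε, mul_one_div, div_le_one (by linarith)]
    push_cast at this
    linarith
  have hxi : x (p + 1) = pt2 (p * ε) 0 := by rw [hx]; push_cast; ring_nf
  have hxj : x (p + m + 1) = pt2 ((p + m) * ε) 0 := by rw [hx]; push_cast; ring_nf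
  have hJ₀ : 0 ≤ ∫ t in 0..ε, √(1 + bumpTrain' A ε n t ^ 2) :=
    intervalIntegral.integral_nonneg hε₀.le fun _ _ => Real.sqrt_nonneg _
  rw [hM₁, hM₂, hxi, hxj, intrinsicDist_segment (by positivity) (by gcongr; simp) hpm₁,
    intrinsicDist_bumpTrain_graph hε₀ (by omega) hpm₁, hη, eVariationOn_bumpTrain_graph hε₀,
    ENNReal.toReal_ofReal hJ₀, ENNReal.toReal_ofReal (mul_nonneg (Nat.cast_nonneg m) hJ₀),
    ENNReal.toReal_ofReal (by nlinarith)]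
  have hJ_le := integral_sqrt_one_add_bumpTrain'_sq_le (A := A) hε₀ hn
  have hJ_ge := le_integral_sqrt_one_add_bumpTrain'_sq (A := A) hε₀ hn
  rw [← hC₁] at hJ_le hJ_ge
  rw [← hC₂] at hJ_ge
  push_cast
  refine ⟨by ring, by ring, by nlinarith, by nlinarith, by ring, fun hC => ?_⟩
  nlinarith [mul_le_mul_of_nonneg_right hC (pow_nonneg hε₀.le 3)]

/-- In the two-curve setting (`M₁` a segment, `M₂` its bumped version, common
sample points `x_i = ((i−1)ε, 0)`), for all `1 ≤ i < j ≤ n`: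
`d_{M₁}(x_i,x_j) = (j−i)ε`, `d_{M₂}(x_i,x_j) = (j−i)η`, and
`(j−i)(C₁ε³ − C₂ε⁵) ≤ d_{M₂} − d_{M₁} ≤ (j−i)C₁ε³ = C₁ε²·d_{M₁}`; in particular if
`C₂ε² ≤ C₁/2` then `d_{M₂} − d_{M₁} ≥ (C₁/2)ε²·d_{M₁}`. -/
theorem two_curve_distances (A : ℝ) (hA : 0 < A) (n : ℕ) (hn : 2 ≤ n)
    (ε : ℝ) (hε : ε = 1 / ((n : ℝ) - 1))
    (M₁ M₂ : Set (EuclideanSpace ℝ (Fin 2)))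
    (hM₁ : M₁ = {p | ∃ t ∈ Icc (0 : ℝ) 1, p = pt2 t 0})
    (hM₂ : M₂ = {p | ∃ t ∈ Icc (0 : ℝ) 1, p = pt2 t (bumpTrain A ε n t)})
    (x : ℕ → EuclideanSpace ℝ (Fin 2)) (hx : ∀ i, x i = pt2 (((i : ℝ) - 1) * ε) 0)
    (η : ℝ) (hη : η = (eVariationOn (fun t => pt2 t (bumpTrain A ε n t)) (Icc 0 ε)).toReal)
    (C₁ : ℝ) (hC₁ : C₁ = A ^ 2 / 16 * ∫ t in (-1 : ℝ)..1, (deriv triCube t) ^ 2)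
    (C₂ : ℝ) (hC₂ : C₂ = A ^ 4 / 256 * ∫ t in (-1 : ℝ)..1, (deriv triCube t) ^ 4)
    (i j : ℕ) (hi : 1 ≤ i) (hij : i < j) (hj : j ≤ n) :
    (intrinsicDist M₁ (x i) (x j)).toReal = ((j : ℝ) - i) * ε ∧
    (intrinsicDist M₂ (x i) (x j)).toReal = ((j : ℝ) - i) * η ∧
    ((j : ℝ) - i) * (C₁ * ε ^ 3 - C₂ * ε ^ 5) ≤
      (intrinsicDist M₂ (x i) (x j)).toReal - (intrinsicDist M₁ (x i) (x j)).toReal ∧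
    (intrinsicDist M₂ (x i) (x j)).toReal - (intrinsicDist M₁ (x i) (x j)).toReal ≤
      ((j : ℝ) - i) * (C₁ * ε ^ 3) ∧
    ((j : ℝ) - i) * (C₁ * ε ^ 3) = C₁ * ε ^ 2 * (intrinsicDist M₁ (x i) (x j)).toReal ∧
    (C₂ * ε ^ 2 ≤ C₁ / 2 →
      C₁ / 2 * ε ^ 2 * (intrinsicDist M₁ (x i) (x j)).toReal ≤
        (intrinsicDist M₂ (x i) (x j)).toReal - (intrinsicDist M₁ (x i) (x j)).toReal) :=
  two_curve_distances_general A n hn ε hε M₁ M₂ hM₁ hM₂ x hx η hη C₁ hC₁ C₂ hC₂ i j hi hij hj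
end
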